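/- Assume additionally (Monotonicity) W1 ≥ W0 P-almost surely. Then the subdistribution of the untreated potential outcome among compliers is identified: for every y ∈ ℝ, E[(1 − W)·1{Y ≤ y} | Z = 0] − E[(1 − W)·1{Y ≤ y} | Z = 1] = P({Y0 ≤ y} ∩ C). -/

import Mathlib

/-!
On `{Z = z}` the observed treatment is `W_z`, and since `Y = Y0` wherever `W = 0`,
`(1 - W)·1{Y ≤ y} = (1 - W_z)·1{Y0 ≤ y}` there. This is a function of the potential
variables alone, so independence of `Z` turns the conditional mean given `Z = z` into the
unconditional mean `E[(1 - W_z)·1{Y0 ≤ y}]`. Under monotonicity `W1 - W0` is the complier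
indicator, so the difference of the two means is `P({Y0 ≤ y} ∩ C)`.
-/

open MeasureTheory ProbabilityTheory

/-- Conditional mean given an event: `E[U | A] := E[U · 1_A] / P(A)`. -/
noncomputable def condMean {Ω : Type*} [MeasurableSpace Ω] (P : Measure Ω)
    (U : Ω → ℝ) (A : Set Ω) : ℝ :=
  (∫ ω in A, U ω ∂P) / (P A).toReal

section CondMean

variable {Ω β γ : Type*} [MeasurableSpace Ω] [MeasurableSpace β] [MeasurableSpace γ]
  {P : Measure Ω}

theorem condMean_congr {U V : Ω → ℝ} {A : Set Ω} (hA : MeasurableSet A) (h : Set.EqOn U V A) :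
    condMean P U A = condMean P V A := by
  rw [condMean, condMean, setIntegral_congr_fun hA h]

theorem condMean_preimage_of_indepFun [IsFiniteMeasure P] {Z : Ω → β} {X : Ω → γ} {f : γ → ℝ}
    {s : Set β} (hZ : Measurable Z) (hX : AEMeasurable X P)
    (hf : AEStronglyMeasurable f (P.map X)) (hindep : IndepFun Z X P) (hs : MeasurableSet s)
    (hPs : P (Z ⁻¹' s) ≠ 0) :
    condMean P (fun ω => f (X ω)) (Z ⁻¹' s) = ∫ ω, f (X ω) ∂P := by
  have hPs' : (P (Z ⁻¹' s)).toReal ≠ 0 := ENNReal.toReal_ne_zero.2 ⟨hPs, measure_ne_top _ _⟩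
  rw [condMean, (IndepFun_iff_Indep Z X P).1 hindep |>.setIntegral_eq_mul hZ.comap_le hX
    ⟨s, hs, rfl⟩ hf, measureReal_def, mul_div_cancel_left₀ _ hPs']

end CondMean

theorem one_sub_mul_ite_switch {w a b y : ℝ} (hw : w = 0 ∨ w = 1) :
    (1 - w) * (if w * a + (1 - w) * b ≤ y then (1 : ℝ) else 0)
      = (1 - w) * (if b ≤ y then 1 else 0) := by
  rcases hw with rfl | rfl <;> simp

theorem one_sub_mul_sub_one_sub_mul {w₀ w₁ c : ℝ} (h₀ : w₀ = 0 ∨ w₀ = 1) (h₁ : w₁ = 0 ∨ w₁ = 1)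
    (hle : w₀ ≤ w₁) : (1 - w₀) * c - (1 - w₁) * c = if w₀ < w₁ then c else 0 := by
  rcases h₀ with rfl | rfl <;> rcases h₁ with rfl | rfl <;> norm_num at *

theorem measurable_one_sub_mul_ite_le {α : Type*} [MeasurableSpace α] {w v : α → ℝ}
    (hw : Measurable w) (hv : Measurable v) (y : ℝ) :
    Measurable fun a => (1 - w a) * if v a ≤ y then (1 : ℝ) else 0 :=
  (measurable_const.sub hw).mul <|
    Measurable.ite (measurableSet_le hv measurable_const) measurable_const measurable_const

section Arms

variable {Ω : Type*} [MeasurableSpace Ω] {P : Measure Ω} [IsFiniteMeasure P]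

theorem integrable_one_sub_mul_ite_le {W Y : Ω → ℝ} (hW : Measurable W) (hY : Measurable Y)
    (hWbin : ∀ ω, W ω = 0 ∨ W ω = 1) (y : ℝ) :
    Integrable (fun ω => (1 - W ω) * if Y ω ≤ y then (1 : ℝ) else 0) P :=
  Integrable.of_bound (measurable_one_sub_mul_ite_le hW hY y).aestronglyMeasurable 1 <|
    ae_of_all _ fun ω => by rcases hWbin ω with h | h <;> split_ifs <;> simp [h]

theorem condMean_untreated_eq_integral {Z W Wz Y Y0 Y1 : Ω → ℝ} {z : ℝ} (hZ : Measurable Z)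
    (hWz : Measurable Wz) (hY0 : Measurable Y0) (hindep : IndepFun Z (fun ω => (Y0 ω, Wz ω)) P)
    (hWzbin : ∀ ω, Wz ω = 0 ∨ Wz ω = 1) (hW : ∀ ω, Z ω = z → W ω = Wz ω)
    (hY : ∀ ω, Y ω = W ω * Y1 ω + (1 - W ω) * Y0 ω) (hPz : P {ω | Z ω = z} ≠ 0) (y : ℝ) :
    condMean P (fun ω => (1 - W ω) * if Y ω ≤ y then (1 : ℝ) else 0) {ω | Z ω = z}
      = ∫ ω, (1 - Wz ω) * (if Y0 ω ≤ y then (1 : ℝ) else 0) ∂P := by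
  have hEq : Set.EqOn (fun ω => (1 - W ω) * if Y ω ≤ y then (1 : ℝ) else 0)
      (fun ω => (1 - Wz ω) * if Y0 ω ≤ y then (1 : ℝ) else 0) {ω | Z ω = z} := fun ω hω => by
    simp only [hY ω, hW ω hω]
    exact one_sub_mul_ite_switch (hWzbin ω)
  refine (condMean_congr (hZ (measurableSet_singleton z)) hEq).trans ?_
  exact condMean_preimage_of_indepFun (f := fun p : ℝ × ℝ => (1 - p.2) * if p.1 ≤ y then 1 else 0)
    hZ (by fun_prop)
    (measurable_one_sub_mul_ite_le measurable_snd measurable_fst y).aestronglyMeasurable hindep (measurableSet_singleton z) hPz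

end Arms

theorem untreated_subdistribution_identified_general
    {Ω : Type*} [MeasurableSpace Ω] (P : Measure Ω) [IsProbabilityMeasure P]
    (Z W0 W1 Y0 Y1 : Ω → ℝ)
    (hZ : Measurable Z) (hW0 : Measurable W0) (hW1 : Measurable W1)
    (hY0 : Measurable Y0)
    (hZbin : ∀ ω, Z ω = 0 ∨ Z ω = 1)
    (hW0bin : ∀ ω, W0 ω = 0 ∨ W0 ω = 1)
    (hW1bin : ∀ ω, W1 ω = 0 ∨ W1 ω = 1)
    (W Y : Ω → ℝ)
    (hWdef : ∀ ω, W ω = Z ω * W1 ω + (1 - Z ω) * W0 ω)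
    (hYdef : ∀ ω, Y ω = W ω * Y1 ω + (1 - W ω) * Y0 ω)
    (hindep : IndepFun Z (fun ω => (Y0 ω, Y1 ω, W0 ω, W1 ω)) P)
    (hoverlap : 0 < P {ω | Z ω = 1} ∧ P {ω | Z ω = 1} < 1)
    (hmono : ∀ᵐ ω ∂P, W0 ω ≤ W1 ω) :
    ∀ y : ℝ,
      condMean P (fun ω => (1 - W ω) * (if Y ω ≤ y then (1 : ℝ) else 0)) {ω | Z ω = 0}
        - condMean P (fun ω => (1 - W ω) * (if Y ω ≤ y then (1 : ℝ) else 0)) {ω | Z ω = 1}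
      = (P ({ω | Y0 ω ≤ y} ∩ {ω | W0 ω < W1 ω})).toReal := by
  intro y
  have hP0 : P {ω | Z ω = 0} ≠ 0 := by
    have hcompl : {ω | Z ω = 0} = {ω | Z ω = 1}ᶜ := by
      ext ω; rcases hZbin ω with h | h <;> simp [h]
    rw [hcompl, prob_compl_eq_one_sub (measurableSet_eq_fun hZ measurable_const)]
    exact (tsub_pos_of_lt hoverlap.2).ne'
  have hindep₀ := hindep.comp measurable_id (measurable_fst.prodMk measurable_snd.snd.fst)
  have hindep₁ := hindep.comp measurable_id (measurable_fst.prodMk measurable_snd.snd.snd)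
  rw [condMean_untreated_eq_integral hZ hW0 hY0 hindep₀ hW0bin
      (fun ω hω => by rw [hWdef ω, hω]; ring) hYdef hP0,
    condMean_untreated_eq_integral hZ hW1 hY0 hindep₁ hW1bin
      (fun ω hω => by rw [hWdef ω, hω]; ring) hYdef hoverlap.1.ne',
    ← integral_sub (integrable_one_sub_mul_ite_le hW0 hY0 hW0bin y)
      (integrable_one_sub_mul_ite_le hW1 hY0 hW1bin y),
    ← measureReal_def, ← integral_indicator_one ((measurableSet_le hY0 measurable_const).inter
      (measurableSet_lt hW0 hW1))]
  refine integral_congr_ae (hmono.mono fun ω hle => ?_)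
  dsimp only
  rw [one_sub_mul_sub_one_sub_mul (hW0bin ω) (hW1bin ω) hle]
  by_cases hc : W0 ω < W1 ω <;> by_cases hy : Y0 ω ≤ y <;> simp [hc, hy]

/-- The subdistribution of the untreated potential outcome among compliers is identified:
`E[(1 − W)·1{Y ≤ y} | Z = 0] − E[(1 − W)·1{Y ≤ y} | Z = 1] = P({Y0 ≤ y} ∩ C)`. -/
theorem untreated_subdistribution_identified
    {Ω : Type*} [MeasurableSpace Ω] (P : Measure Ω) [IsProbabilityMeasure P]
    (Z W0 W1 Y0 Y1 : Ω → ℝ)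
    (hZ : Measurable Z) (hW0 : Measurable W0) (hW1 : Measurable W1)
    (hY0 : Measurable Y0) (hY1 : Measurable Y1)
    (hZbin : ∀ ω, Z ω = 0 ∨ Z ω = 1)
    (hW0bin : ∀ ω, W0 ω = 0 ∨ W0 ω = 1)
    (hW1bin : ∀ ω, W1 ω = 0 ∨ W1 ω = 1)
    (W Y : Ω → ℝ)
    (hWdef : ∀ ω, W ω = Z ω * W1 ω + (1 - Z ω) * W0 ω)
    (hYdef : ∀ ω, Y ω = W ω * Y1 ω + (1 - W ω) * Y0 ω)
    (hindep : IndepFun Z (fun ω => (Y0 ω, Y1 ω, W0 ω, W1 ω)) P)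
    (hoverlap : 0 < P {ω | Z ω = 1} ∧ P {ω | Z ω = 1} < 1)
    (hmono : ∀ᵐ ω ∂P, W0 ω ≤ W1 ω) :
    ∀ y : ℝ,
      condMean P (fun ω => (1 - W ω) * (if Y ω ≤ y then (1 : ℝ) else 0)) {ω | Z ω = 0}
        - condMean P (fun ω => (1 - W ω) * (if Y ω ≤ y then (1 : ℝ) else 0)) {ω | Z ω = 1}
      = (P ({ω | Y0 ω ≤ y} ∩ {ω | W0 ω < W1 ω})).toReal :=
  untreated_subdistribution_identified_general P Z W0 W1 Y0 Y1 hZ hW0 hW1 hY0 hZbin hW0bin hW1bin W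
    Y hWdef hYdef hindep hoverlap hmono
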